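/- arXiv:1609.04087 — 3 statements merged into one kernel-verified Lean document; each statement's English description precedes it below -/
import Mathlib

section
/- Let G be a parity game, α ∈ {0,1} a player, and R ⊆ Pos an α-region in G. Then R★ := atr^α(R), the α-attractor of R in G, is an α-maximal α-region in G. -/
open Filter Set

/-- A parity game: disjoint finite sets of positions of players 0 and 1, a left-total
move relation among positions, and a priority function. -/
structure PGame (V : Type*) where
  pos0 : Set V
  pos1 : Set V
  mv : V → V → Prop
  pr : V → ℕ
  disj : Disjoint pos0 pos1
  finpos : (pos0 ∪ pos1).Finite
  mv_mem : ∀ ⦃v u : V⦄, mv v u → v ∈ pos0 ∪ pos1 ∧ u ∈ pos0 ∪ pos1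
  leftTotal : ∀ v ∈ pos0 ∪ pos1, ∃ u, mv v u

namespace PGame

variable {V : Type*}

/-- The set of positions of the game. -/
def pos (G : PGame V) : Set V := G.pos0 ∪ G.pos1

/-- The positions of player `α` (`α ∈ {0,1}`; the opponent of `α` is `1 - α`). -/
def posOf (G : PGame V) (α : ℕ) : Set V := if α = 0 then G.pos0 else G.pos1

/-- The maximal priority `pr(G)` of the game. -/
noncomputable def maxPr (G : PGame V) : ℕ := sSup (G.pr '' G.pos)

/-- `pre^α(U)`: positions from which player `α` can force reaching `U` in one move. -/
def pre (G : PGame V) (α : ℕ) (U : Set V) : Set V :=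
  {v ∈ G.posOf α | ∃ u ∈ U, G.mv v u} ∪
    {v ∈ G.posOf (1 - α) | ∀ u, G.mv v u → u ∈ U}

lemma pre_mono (G : PGame V) (α : ℕ) : Monotone (G.pre α) := by
  intro U U' h v hv
  rcases hv with ⟨h1, u, hu, hm⟩ | ⟨h1, h2⟩
  · exact Or.inl ⟨h1, u, h hu, hm⟩
  · exact Or.inr ⟨h1, fun u hm => h (h2 u hm)⟩

/-- `atr^α(A)`: the `α`-attractor of `A`, the least fixed point of `U ↦ A ∪ pre^α(U)`. -/
noncomputable def atr (G : PGame V) (α : ℕ) (A : Set V) : Set V :=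
  OrderHom.lfp ⟨fun U => A ∪ G.pre α U, fun U U' h => union_subset_union subset_rfl (G.pre_mono α h)⟩

/-- `A` is `α`-maximal if it coincides with its own `α`-attractor. -/
def IsMaximal (G : PGame V) (α : ℕ) (A : Set V) : Prop := G.atr α A = A

/-- `esc^α(Q)`: the `α`-escape of `Q`. -/
def esc (G : PGame V) (α : ℕ) (Q : Set V) : Set V := G.pre α (G.pos \ Q) ∩ Q

/-- `int^α(Q)`: the `α`-interior of `Q`. -/
def intOf (G : PGame V) (α : ℕ) (Q : Set V) : Set V := (Q ∩ G.posOf α) \ G.esc α Q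

/-- A positional `α`-strategy on `U`: a partial function (encoded with `Option`) from
`U ∩ Pos_α` to `U` compatible with the move relation. -/
def IsStrat (G : PGame V) (α : ℕ) (U : Set V) (σ : V → Option V) : Prop :=
  ∀ v u, σ v = some u → v ∈ U ∩ G.posOf α ∧ u ∈ U ∧ G.mv v u

-- One step of the play function: from `v`, player 0 positions move according to `σ0`,
-- the others according to `σ1`.
open Classical in
noncomputable def step (G : PGame V) (σ0 σ1 : V → Option V) (v : V) : Option V :=
  if v ∈ G.pos0 then σ0 v else σ1 v

/-- The maximal play induced by the pair of strategies `(σ0, σ1)` from `v`,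
as a sequence of `Option`s (`none` from the point the play has stopped on). -/
noncomputable def play (G : PGame V) (σ0 σ1 : V → Option V) (v : V) : ℕ → Option V
  | 0 => some v
  | n + 1 => (G.play σ0 σ1 v n).bind (G.step σ0 σ1)

/-- The priorities visited along a play (defaulting to `0` after the play has stopped). -/
noncomputable def playPr (G : PGame V) (σ0 σ1 : V → Option V) (v : V) (n : ℕ) : ℕ :=
  ((G.play σ0 σ1 v n).map G.pr).getD 0

/-- `Q` is a quasi `α`-dominion in `G`. -/
noncomputable def QuasiDom (G : PGame V) (α : ℕ) (Q : Set V) : Prop :=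
  Q.Nonempty ∧ Q ⊆ G.pos ∧
  ∃ σa : V → Option V, G.IsStrat α Q σa ∧
    ∀ σb : V → Option V, G.IsStrat (1 - α) Q σb →
      G.intOf (1 - α) Q ⊆ {v | (σb v).isSome} →
      ∀ v ∈ Q,
        (((∀ n, (G.play (if α = 0 then σa else σb) (if α = 0 then σb else σa) v n).isSome) →
          Filter.limsup (G.playPr (if α = 0 then σa else σb) (if α = 0 then σb else σa) v)
            Filter.atTop % 2 = α) ∧
        (∀ n u, G.play (if α = 0 then σa else σb) (if α = 0 then σb else σa) v n = some u →
          G.play (if α = 0 then σa else σb) (if α = 0 then σb else σa) v (n + 1) = none →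
          u ∈ G.esc (1 - α) Q))

/-- A quasi `α`-dominion `R` is an `α`-region of `G` when `pr(G) ≡₂ α` and all the
positions in its `ᾱ`-escape have the maximal priority `pr(G)`. -/
noncomputable def IsRegion (G : PGame V) (α : ℕ) (R : Set V) : Prop :=
  G.QuasiDom α R ∧ G.maxPr % 2 = α ∧ ∀ v ∈ G.esc (1 - α) R, G.pr v = G.maxPr

/-- `D` is an `α`-dominion in `G`: player `α` has a strategy defined on all of
`D ∩ Pos_α` such that all induced paths starting in `D` stay in `D` forever and are
winning for `α`. -/
noncomputable def Dominion (G : PGame V) (α : ℕ) (D : Set V) : Prop :=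
  D ⊆ G.pos ∧
  ∃ σ : V → V, (∀ v ∈ D ∩ G.posOf α, σ v ∈ D ∧ G.mv v (σ v)) ∧
    ∀ π : ℕ → V, π 0 ∈ D →
      (∀ i, (π i ∈ G.posOf α → π (i + 1) = σ (π i)) ∧
            (π i ∈ G.posOf (1 - α) → G.mv (π i) (π (i + 1)))) →
      (∀ i, π i ∈ D) ∧ Filter.limsup (fun i => G.pr (π i)) Filter.atTop % 2 = α

/-- The winning region of player `α` in `G`. -/
noncomputable def Win (G : PGame V) (α : ℕ) : Set V :=
  {v ∈ G.pos | ∃ σ : V → V, (∀ u ∈ G.posOf α, G.mv u (σ u)) ∧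
    ∀ π : ℕ → V, π 0 = v →
      (∀ i, (π i ∈ G.posOf α → π (i + 1) = σ (π i)) ∧
            (π i ∈ G.posOf (1 - α) → G.mv (π i) (π (i + 1)))) →
      Filter.limsup (fun i => G.pr (π i)) Filter.atTop % 2 = α}

/-- The set of positions of the subgame `G ∖ U`: the largest subset of `Pos ∖ U` on
which the restricted move relation is still left-total. -/
def subPos (G : PGame V) (U : Set V) : Set V :=
  ⋃₀ {S : Set V | S ⊆ G.pos \ U ∧ ∀ v ∈ S, ∃ u ∈ S, G.mv v u}

lemma subPos_subset (G : PGame V) (U : Set V) : G.subPos U ⊆ G.pos \ U := by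
  rintro v ⟨S, ⟨hS1, _⟩, hvS⟩
  exact hS1 hvS

lemma subPos_step (G : PGame V) (U : Set V) :
    ∀ v ∈ G.subPos U, ∃ u ∈ G.subPos U, G.mv v u := by
  rintro v ⟨S, hS, hvS⟩
  rcases hS.2 v hvS with ⟨u, huS, hm⟩
  exact ⟨u, ⟨S, hS, huS⟩, hm⟩

/-- The subgame `G ∖ U`: the maximal subgame of `G` whose positions are contained in
`Pos ∖ U`, with the restricted move relation. -/
noncomputable def sub (G : PGame V) (U : Set V) : PGame V where
  pos0 := G.pos0 ∩ G.subPos U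
  pos1 := G.pos1 ∩ G.subPos U
  mv v u := G.mv v u ∧ v ∈ G.subPos U ∧ u ∈ G.subPos U
  pr := G.pr
  disj := G.disj.mono inter_subset_left inter_subset_left
  finpos := G.finpos.subset (union_subset_union inter_subset_left inter_subset_left)
  mv_mem := by
    rintro v u ⟨hm, hv, hu⟩
    have hv' : v ∈ G.pos := (G.subPos_subset U hv).1
    have hu' : u ∈ G.pos := (G.subPos_subset U hu).1
    constructor
    · rcases hv' with h | h
      · exact Or.inl ⟨h, hv⟩
      · exact Or.inr ⟨h, hv⟩
    · rcases hu' with h | h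
      · exact Or.inl ⟨h, hu⟩
      · exact Or.inr ⟨h, hu⟩
  leftTotal := by
    intro v hv
    have hv' : v ∈ G.subPos U := by
      rcases hv with ⟨_, h⟩ | ⟨_, h⟩ <;> exact h
    rcases G.subPos_step U v hv' with ⟨u, hu, hm⟩
    exact ⟨u, hm, hv', hu⟩

end PGame

/-! The attractor strategy follows the quasi-dominion strategy `σ` of `R` inside `R` and
decreases the attractor rank outside it, so a play that leaves `R` comes back to it. An infinite
play therefore either stays in `R` from some point on, where it is a play of `σ` and is won by
`α`, or it leaves `R` infinitely often; it can only leave through the escape of `R`, whose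
positions carry the maximal priority `pr(G)`, of parity `α`. The escape of `atr^α(R)` lies in
that of `R`, since no position of `pre^α(atr^α(R))` can escape `atr^α(R)`. -/

lemma Option.forall_isSome_imp_iff {X : Type*} {p : ℕ → Option X} (f : X → ℕ)
    (P : (ℕ → ℕ) → Prop) :
    ((∀ n, (p n).isSome) → P (fun n => ((p n).map f).getD 0)) ↔
      ∀ π : ℕ → X, (∀ n, p n = some (π n)) → P (f ∘ π) := by
  constructor
  · intro h π hπ
    convert h fun n => by simp [hπ n] using 2 with n
    simp [hπ n]
  · intro h hp
    convert h (fun n => (p n).get (hp n)) fun n => by simp using 2 with n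
    obtain ⟨x, hx⟩ := Option.isSome_iff_exists.mp (hp n)
    simp [hx]

lemma frequently_atTop_of_lt_of_not {f : ℕ → ℕ} {p : ℕ → Prop}
    (h : ∀ n, ¬ p n → f (n + 1) < f n) : ∃ᶠ n in atTop, p n := by
  refine frequently_atTop.mpr fun N => ?_
  by_contra! hN
  have hdec : ∀ k, f (N + k) + k ≤ f N := by
    intro k
    induction k with
    | zero => simp
    | succ k ih =>
      have := h (N + k) (hN _ (by omega))
      show f (N + k + 1) + (k + 1) ≤ f N
      omega
  have := hdec (f N + 1)
  omega

lemma Filter.Frequently.and_not_succ {p : ℕ → Prop} (h : ∃ᶠ n in atTop, p n)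
    (h' : ∃ᶠ n in atTop, ¬ p n) : ∃ᶠ n in atTop, p n ∧ ¬ p (n + 1) := by
  refine fun hev => h' ?_
  obtain ⟨N, hN⟩ := eventually_atTop.mp hev
  obtain ⟨a, ha, hpa⟩ := frequently_atTop.mp h N
  have hstay : ∀ k, p (a + k) := by
    intro k
    induction k with
    | zero => exact hpa
    | succ k ih => exact not_not.mp fun hk => hN (a + k) (by omega) ⟨ih, hk⟩
  refine eventually_atTop.mpr ⟨a, fun n hn => ?_⟩
  obtain ⟨k, rfl⟩ := Nat.exists_eq_add_of_le hn
  exact not_not.mpr (hstay k)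

lemma limsup_eq_of_frequently_eq {u : ℕ → ℕ} {M : ℕ} (hle : ∀ n, u n ≤ M)
    (h : ∃ᶠ n in atTop, u n = M) : limsup u atTop = M :=
  le_antisymm (limsup_le_of_le (by isBoundedDefault) (.of_forall hle))
    (le_limsup_of_frequently_le (h.mono fun _ hn => hn.ge) (isBoundedUnder_of ⟨M, hle⟩))

namespace PGame

variable {V : Type*} {G : PGame V} {α β : ℕ} {v u w : V} {A Q R U : Set V}

lemma posOf_subset_pos (G : PGame V) (α : ℕ) : G.posOf α ⊆ G.pos := by
  unfold posOf pos
  split_ifs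
  exacts [subset_union_left, subset_union_right]

lemma posOf_union_posOf_sub (G : PGame V) (α : ℕ) : G.posOf α ∪ G.posOf (1 - α) = G.pos := by
  unfold posOf pos
  split_ifs <;> first | omega | simp [union_comm]

lemma disjoint_posOf_posOf_sub (G : PGame V) (α : ℕ) :
    Disjoint (G.posOf α) (G.posOf (1 - α)) := by
  unfold posOf
  split_ifs <;> first | omega | exact G.disj | exact G.disj.symm

lemma posOf_sub_sub (G : PGame V) (α : ℕ) : G.posOf (1 - (1 - α)) = G.posOf α := by
  unfold posOf
  split_ifs <;> first | rfl | omega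

lemma mem_posOf_or_mem_posOf_sub (hv : v ∈ G.pos) : v ∈ G.posOf α ∨ v ∈ G.posOf (1 - α) := by
  rwa [← mem_union, posOf_union_posOf_sub]

lemma pre_subset_pos (G : PGame V) (α : ℕ) (U : Set V) : G.pre α U ⊆ G.pos := by
  rintro v (⟨hv, -⟩ | ⟨hv, -⟩) <;> exact G.posOf_subset_pos _ hv

lemma mem_pre_of_mem_posOf (hv : v ∈ G.posOf α) : v ∈ G.pre α U ↔ ∃ u ∈ U, G.mv v u := by
  have hv' : v ∉ G.posOf (1 - α) := G.disjoint_posOf_posOf_sub α |>.notMem_of_mem_left hv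
  simp [pre, hv, hv']

lemma mem_pre_of_mem_posOf_sub (hv : v ∈ G.posOf (1 - α)) :
    v ∈ G.pre α U ↔ ∀ u, G.mv v u → u ∈ U := by
  have hv' : v ∉ G.posOf α := G.disjoint_posOf_posOf_sub α |>.notMem_of_mem_right hv
  simp [pre, hv, hv']

lemma disjoint_pre_pre_sub_compl (G : PGame V) (α : ℕ) (U : Set V) :
    Disjoint (G.pre α U) (G.pre (1 - α) (G.pos \ U)) := by
  refine Set.disjoint_left.mpr fun v hv hv' => ?_
  rcases G.mem_posOf_or_mem_posOf_sub (α := α) (G.pre_subset_pos α U hv) with hvα | hvβ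
  · obtain ⟨u, hu, h⟩ := (mem_pre_of_mem_posOf hvα).mp hv
    rw [← posOf_sub_sub] at hvα
    exact ((mem_pre_of_mem_posOf_sub hvα).mp hv' u h).2 hu
  · obtain ⟨u, hu, h⟩ := (mem_pre_of_mem_posOf hvβ).mp hv'
    exact hu.2 ((mem_pre_of_mem_posOf_sub hvβ).mp hv u h)

lemma mem_esc_of_mem_posOf (hv : v ∈ G.posOf β) :
    v ∈ G.esc β Q ↔ v ∈ Q ∧ ∃ u, G.mv v u ∧ u ∉ Q := by
  simp only [esc, mem_inter_iff, mem_pre_of_mem_posOf hv, Set.mem_sdiff]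
  exact ⟨fun ⟨⟨u, ⟨_, hu⟩, h⟩, hvQ⟩ => ⟨hvQ, u, h, hu⟩,
    fun ⟨hvQ, u, h, hu⟩ => ⟨⟨u, ⟨(G.mv_mem h).2, hu⟩, h⟩, hvQ⟩⟩

lemma mem_esc_sub_of_mem_posOf (hv : v ∈ G.posOf α) :
    v ∈ G.esc (1 - α) Q ↔ v ∈ Q ∧ ∀ u, G.mv v u → u ∉ Q := by
  rw [← posOf_sub_sub] at hv
  simp only [esc, mem_inter_iff, mem_pre_of_mem_posOf_sub hv, Set.mem_sdiff]
  exact ⟨fun ⟨h, hvQ⟩ => ⟨hvQ, fun u hu => (h u hu).2⟩,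
    fun ⟨hvQ, h⟩ => ⟨fun u hu => ⟨(G.mv_mem hu).2, h u hu⟩, hvQ⟩⟩

lemma mem_intOf_of_mem_posOf (hv : v ∈ G.posOf β) :
    v ∈ G.intOf β Q ↔ v ∈ Q ∧ ∀ u, G.mv v u → u ∈ Q := by
  rw [intOf, Set.mem_sdiff, mem_inter_iff, mem_esc_of_mem_posOf hv]
  grind

lemma union_pre_atr (G : PGame V) (α : ℕ) (A : Set V) :
    A ∪ G.pre α (G.atr α A) = G.atr α A :=
  OrderHom.map_lfp
    ⟨fun U => A ∪ G.pre α U, fun _ _ h => union_subset_union subset_rfl (G.pre_mono α h)⟩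

lemma subset_atr (G : PGame V) (α : ℕ) (A : Set V) : A ⊆ G.atr α A :=
  subset_union_left.trans (G.union_pre_atr α A).subset

lemma pre_atr_subset (G : PGame V) (α : ℕ) (A : Set V) : G.pre α (G.atr α A) ⊆ G.atr α A :=
  subset_union_right.trans (G.union_pre_atr α A).subset

lemma atr_subset_of_union_pre_subset (h : A ∪ G.pre α U ⊆ U) : G.atr α A ⊆ U :=
  OrderHom.lfp_le _ h

lemma atr_subset_pos (hA : A ⊆ G.pos) : G.atr α A ⊆ G.pos :=
  atr_subset_of_union_pre_subset (union_subset hA (G.pre_subset_pos α _))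

lemma atr_atr (G : PGame V) (α : ℕ) (A : Set V) : G.atr α (G.atr α A) = G.atr α A :=
  (atr_subset_of_union_pre_subset (union_subset subset_rfl (G.pre_atr_subset α A))).antisymm
    (G.subset_atr α _)

lemma esc_atr_subset : G.esc (1 - α) (G.atr α A) ⊆ G.esc (1 - α) A := by
  rintro v ⟨hv, hvA⟩
  rw [← G.union_pre_atr α A] at hvA
  rcases hvA with hvA | hvA
  · exact ⟨G.pre_mono _ (sdiff_subset_sdiff_right (G.subset_atr α A)) hv, hvA⟩
  · exact (G.disjoint_pre_pre_sub_compl α _ |>.notMem_of_mem_left hvA hv).elim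

def atrApprox (G : PGame V) (α : ℕ) (A : Set V) : ℕ → Set V
  | 0 => A
  | k + 1 => A ∪ G.pre α (G.atrApprox α A k)

lemma atrApprox_mono (G : PGame V) (α : ℕ) (A : Set V) : Monotone (G.atrApprox α A) := by
  refine monotone_nat_of_le_succ fun k => ?_
  induction k with
  | zero => exact subset_union_left
  | succ k ih => exact union_subset_union subset_rfl (G.pre_mono α ih)

lemma atrApprox_subset_atr (G : PGame V) (α : ℕ) (A : Set V) (k : ℕ) :
    G.atrApprox α A k ⊆ G.atr α A := by
  induction k with
  | zero => exact G.subset_atr α A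
  | succ k ih =>
    exact union_subset (G.subset_atr α A) ((G.pre_mono α ih).trans (G.pre_atr_subset α A))

noncomputable def atrRank (G : PGame V) (α : ℕ) (A : Set V) (v : V) : ℕ :=
  sInf {k | v ∈ G.atrApprox α A k}

lemma atrRank_le {k : ℕ} (hv : v ∈ G.atrApprox α A k) : G.atrRank α A v ≤ k :=
  Nat.sInf_le hv

-- Finiteness of the game is needed: an opponent position enters the stage after all of its
-- successors have entered.
lemma atr_subset_iUnion_atrApprox (G : PGame V) (α : ℕ) (A : Set V) :
    G.atr α A ⊆ ⋃ k, G.atrApprox α A k := by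
  refine atr_subset_of_union_pre_subset (union_subset (subset_iUnion_of_subset 0 subset_rfl) ?_)
  intro v hv
  rcases mem_posOf_or_mem_posOf_sub (G.pre_subset_pos α _ hv) with hvα | hvβ
  · obtain ⟨u, hu, h⟩ := (mem_pre_of_mem_posOf hvα).mp hv
    obtain ⟨k, hk⟩ := mem_iUnion.mp hu
    exact mem_iUnion.mpr ⟨k + 1, Or.inr ((mem_pre_of_mem_posOf hvα).mpr ⟨u, hk, h⟩)⟩
  · have hall := (mem_pre_of_mem_posOf_sub hvβ).mp hv
    have hfin : {u | G.mv v u}.Finite := G.finpos.subset fun u h => (G.mv_mem h).2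
    obtain ⟨K, hK⟩ := (hfin.image (G.atrRank α A)).bddAbove
    refine mem_iUnion.mpr ⟨K + 1, Or.inr ((mem_pre_of_mem_posOf_sub hvβ).mpr fun u h => ?_)⟩
    exact G.atrApprox_mono α A (hK ⟨u, h, rfl⟩) (Nat.sInf_mem (mem_iUnion.mp (hall u h)))

lemma mem_atrApprox_atrRank (hv : v ∈ G.atr α A) : v ∈ G.atrApprox α A (G.atrRank α A v) :=
  Nat.sInf_mem (mem_iUnion.mp (G.atr_subset_iUnion_atrApprox α A hv))

lemma mem_pre_atrRank_lt (hv : v ∈ G.atr α A) (hvA : v ∉ A) :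
    v ∈ G.pre α {u | u ∈ G.atr α A ∧ G.atrRank α A u < G.atrRank α A v} := by
  have hmem := mem_atrApprox_atrRank hv
  obtain ⟨k, hk⟩ : ∃ k, G.atrRank α A v = k + 1 := by
    refine Nat.exists_eq_add_one.mpr (Nat.pos_of_ne_zero fun h => hvA ?_)
    rwa [h] at hmem
  rw [hk] at hmem ⊢
  have hsub : G.atrApprox α A k ⊆ {u | u ∈ G.atr α A ∧ G.atrRank α A u < k + 1} :=
    fun u hu => ⟨G.atrApprox_subset_atr α A k hu, Nat.lt_succ_of_le (atrRank_le hu)⟩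
  exact G.pre_mono α hsub (hmem.resolve_left hvA)

noncomputable def stepOf (G : PGame V) (α : ℕ) (σa σb : V → Option V) : V → Option V :=
  G.step (if α = 0 then σa else σb) (if α = 0 then σb else σa)

noncomputable def playOf (G : PGame V) (α : ℕ) (σa σb : V → Option V) (v : V) : ℕ → Option V :=
  G.play (if α = 0 then σa else σb) (if α = 0 then σb else σa) v

section Plays

variable {σa σb : V → Option V} {π : ℕ → V}

lemma stepOf_of_mem_posOf (hv : v ∈ G.posOf α) : G.stepOf α σa σb v = σa v := by
  by_cases hα : α = 0
  · simp_all [stepOf, step, posOf]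
  · have hv0 : v ∉ G.pos0 := G.disj.notMem_of_mem_right (by simpa [posOf, hα] using hv)
    simp [stepOf, step, hα, hv0]

lemma stepOf_of_mem_posOf_sub (hv : v ∈ G.posOf (1 - α)) : G.stepOf α σa σb v = σb v := by
  by_cases hα : α = 0
  · have hv0 : v ∉ G.pos0 := G.disj.notMem_of_mem_right (by simpa [posOf, hα] using hv)
    simp [stepOf, step, hα, hv0]
  · have hv0 : v ∈ G.pos0 := by simpa [posOf, show 1 - α = 0 by omega] using hv
    simp [stepOf, step, hα, hv0]

lemma stepOf_eq_or (G : PGame V) (α : ℕ) (σa σb : V → Option V) (v : V) :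
    G.stepOf α σa σb v = σa v ∨ G.stepOf α σa σb v = σb v := by
  unfold stepOf step
  split_ifs <;> simp

lemma playOf_succ (n : ℕ) :
    G.playOf α σa σb v (n + 1) = (G.playOf α σa σb v n).bind (G.stepOf α σa σb) :=
  rfl

lemma stepOf_eq_some (ha : G.IsStrat α Q σa) (hb : G.IsStrat β Q σb)
    (h : G.stepOf α σa σb u = some w) : w ∈ Q ∧ G.mv u w := by
  rcases G.stepOf_eq_or α σa σb u with hs | hs <;> rw [hs] at h
  exacts [(ha u w h).2, (hb u w h).2]

lemma playOf_mem (ha : G.IsStrat α Q σa) (hb : G.IsStrat β Q σb) (hv : v ∈ Q) :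
    ∀ n, G.playOf α σa σb v n = some u → u ∈ Q := by
  intro n
  induction n generalizing u with
  | zero => rintro ⟨⟩; exact hv
  | succ n ih =>
    rw [playOf_succ, Option.bind_eq_some_iff]
    rintro ⟨w, hw, h⟩
    exact (stepOf_eq_some ha hb h).1

lemma stepOf_eq_of_playOf (hπ : ∀ n, G.playOf α σa σb v n = some (π n)) (n : ℕ) :
    G.stepOf α σa σb (π n) = some (π (n + 1)) := by
  simpa [playOf_succ, hπ n] using hπ (n + 1)

lemma playOf_eq_of_stepOf (hπ : ∀ n, G.stepOf α σa σb (π n) = some (π (n + 1))) :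
    ∀ n, G.playOf α σa σb (π 0) n = some (π n)
  | 0 => rfl
  | n + 1 => by rw [playOf_succ, playOf_eq_of_stepOf hπ n, Option.bind_some, hπ n]

end Plays

/-- The strategy condition of `QuasiDom`, with an infinite play given by its sequence of
positions. -/
def QuasiDomStrat (G : PGame V) (α : ℕ) (Q : Set V) (σ : V → Option V) : Prop :=
  G.IsStrat α Q σ ∧
  ∀ σb, G.IsStrat (1 - α) Q σb → G.intOf (1 - α) Q ⊆ {v | (σb v).isSome} → ∀ v ∈ Q,
    (∀ π : ℕ → V, (∀ n, G.playOf α σ σb v n = some (π n)) → limsup (G.pr ∘ π) atTop % 2 = α) ∧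
    ∀ n u, G.playOf α σ σb v n = some u → G.playOf α σ σb v (n + 1) = none →
      u ∈ G.esc (1 - α) Q

lemma quasiDom_iff : G.QuasiDom α Q ↔ Q.Nonempty ∧ Q ⊆ G.pos ∧ ∃ σ, G.QuasiDomStrat α Q σ := by
  unfold QuasiDom QuasiDomStrat playPr
  simp only [Option.forall_isSome_imp_iff G.pr (fun u => limsup u atTop % 2 = α)]
  rfl

open Classical in
noncomputable def moveInto (G : PGame V) (S : Set V) (v : V) : Option V :=
  if h : ∃ u ∈ S, G.mv v u then some h.choose else none

lemma moveInto_eq_some {S : Set V} (h : G.moveInto S v = some u) : u ∈ S ∧ G.mv v u := by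
  unfold moveInto at h
  split_ifs at h with hex
  cases h
  exact hex.choose_spec

lemma moveInto_eq_none {S : Set V} (h : G.moveInto S v = none) : ∀ u ∈ S, ¬ G.mv v u := by
  unfold moveInto at h
  split_ifs at h with hex
  simpa using hex

lemma moveInto_isSome {S : Set V} (hu : u ∈ S) (h : G.mv v u) : (G.moveInto S v).isSome := by
  rw [Option.isSome_iff_ne_none]
  exact fun hn => moveInto_eq_none hn u hu h

open Classical in
noncomputable def atrStrat (G : PGame V) (α : ℕ) (R : Set V) (σ : V → Option V) (v : V) :
    Option V :=
  if v ∈ G.atr α R ∩ G.posOf α then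
    if v ∈ R then (σ v).or (G.moveInto (G.atr α R) v)
    else G.moveInto {u | u ∈ G.atr α R ∧ G.atrRank α R u < G.atrRank α R v} v
  else none

section AtrStrat

variable {σ : V → Option V}

lemma atrStrat_of_mem (hvα : v ∈ G.posOf α) (hv : v ∈ R) :
    G.atrStrat α R σ v = (σ v).or (G.moveInto (G.atr α R) v) := by
  simp [atrStrat, hvα, hv, G.subset_atr α R hv]

lemma isStrat_atrStrat (hσ : G.IsStrat α R σ) : G.IsStrat α (G.atr α R) (G.atrStrat α R σ) := by
  intro v u h
  unfold atrStrat at h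
  split_ifs at h with hv hvR
  · refine ⟨hv, ?_⟩
    rcases hσv : σ v with _ | x <;> rw [hσv] at h
    · exact moveInto_eq_some h
    · cases h
      obtain ⟨-, hu, hm⟩ := hσ v u hσv
      exact ⟨G.subset_atr α R hu, hm⟩
  · exact ⟨hv, (moveInto_eq_some h).1.1, (moveInto_eq_some h).2⟩

lemma atrRank_lt_of_atrStrat (hv : v ∉ R) (h : G.atrStrat α R σ v = some u) :
    G.atrRank α R u < G.atrRank α R v := by
  unfold atrStrat at h
  split_ifs at h
  exact (moveInto_eq_some h).1.2

lemma mem_esc_of_atrStrat_eq_none (hvα : v ∈ G.posOf α) (hv : v ∈ G.atr α R)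
    (h : G.atrStrat α R σ v = none) : v ∈ G.esc (1 - α) (G.atr α R) := by
  by_cases hvR : v ∈ R
  · rw [atrStrat_of_mem hvα hvR, Option.or_eq_none_iff] at h
    exact (mem_esc_sub_of_mem_posOf hvα).mpr ⟨hv, fun u hm hu => moveInto_eq_none h.2 u hu hm⟩
  · rw [atrStrat, if_pos ⟨hv, hvα⟩, if_neg hvR] at h
    obtain ⟨u, hu, hm⟩ := (mem_pre_of_mem_posOf hvα).mp (mem_pre_atrRank_lt hv hvR)
    exact absurd h (Option.isSome_iff_ne_none.mp (moveInto_isSome hu hm))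

end AtrStrat

lemma QuasiDomStrat.mem_esc_of_eq_none {σ : V → Option V} (hσ : G.QuasiDomStrat α Q σ)
    (hv : v ∈ Q) (hvα : v ∈ G.posOf α) (h : σ v = none) : v ∈ G.esc (1 - α) Q := by
  classical
  -- against an opponent who never leaves `Q`, a play stuck at `v` must be stuck in the escape
  let σb : V → Option V := fun w => if w ∈ G.intOf (1 - α) Q then G.moveInto Q w else none
  have hσb : G.IsStrat (1 - α) Q σb := by
    intro w u hw
    simp only [σb] at hw
    split_ifs at hw with hint
    exact ⟨hint.1, moveInto_eq_some hw⟩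
  have hdom : G.intOf (1 - α) Q ⊆ {w | (σb w).isSome} := by
    intro w hw
    obtain ⟨u, hu⟩ := G.leftTotal w (G.posOf_subset_pos _ hw.1.2)
    show (σb w).isSome
    simp only [σb, if_pos hw]
    exact moveInto_isSome (((mem_intOf_of_mem_posOf hw.1.2).mp hw).2 u hu) hu
  refine (hσ.2 σb hσb hdom v hv).2 0 v rfl ?_
  rw [playOf_succ]
  exact (stepOf_of_mem_posOf hvα).trans h

open Classical in
noncomputable def restrictStrat (σ : V → Option V) (Q : Set V) (w : V) : Option V :=
  if w ∈ Q ∧ ∃ u ∈ Q, σ w = some u then σ w else none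

section Restrict

variable {σ : V → Option V} {Q' : Set V}

lemma restrictStrat_eq (hw : w ∈ Q) (hu : u ∈ Q) (h : σ w = some u) :
    restrictStrat σ Q w = some u := by
  rw [restrictStrat, if_pos ⟨hw, u, hu, h⟩, h]

lemma isStrat_restrictStrat (hσ : G.IsStrat β Q' σ) : G.IsStrat β Q (restrictStrat σ Q) := by
  intro w u h
  unfold restrictStrat at h
  split_ifs at h with hw
  obtain ⟨hwQ, x, hx, hσx⟩ := hw
  obtain rfl : x = u := Option.some.inj (hσx.symm.trans h)
  exact ⟨⟨hwQ, (hσ w x h).1.2⟩, hx, (hσ w x h).2.2⟩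

lemma intOf_subset_restrictStrat (hQ : Q ⊆ Q') (hσ : G.IsStrat β Q' σ)
    (hdom : G.intOf β Q' ⊆ {w | (σ w).isSome}) :
    G.intOf β Q ⊆ {w | (restrictStrat σ Q w).isSome} := by
  intro w hw
  have hwβ := hw.1.2
  obtain ⟨hwQ, hall⟩ := (mem_intOf_of_mem_posOf hwβ).mp hw
  have hw' : w ∈ G.intOf β Q' :=
    (mem_intOf_of_mem_posOf hwβ).mpr ⟨hQ hwQ, fun u h => hQ (hall u h)⟩
  obtain ⟨u, hu⟩ := Option.isSome_iff_exists.mp (hdom hw')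
  simp [restrictStrat_eq hwQ (hall u (hσ w u hu).2.2) hu]

end Restrict

section AtrPlays

variable {σ σb : V → Option V}

lemma stepOf_restrictStrat_of_mem (hR : G.QuasiDomStrat α R σ)
    (hσb : G.IsStrat (1 - α) (G.atr α R) σb) (hu : u ∈ R) (hw : w ∈ R)
    (h : G.stepOf α (G.atrStrat α R σ) σb u = some w) :
    G.stepOf α σ (restrictStrat σb R) u = some w := by
  rcases G.stepOf_eq_or α (G.atrStrat α R σ) σb u with hs | hs <;> rw [hs] at h
  · have huα := (isStrat_atrStrat hR.1 u w h).1.2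
    rw [stepOf_of_mem_posOf huα]
    rw [atrStrat_of_mem huα hu] at h
    rcases hσu : σ u with _ | x
    · rw [hσu, Option.none_or] at h
      have hesc := (mem_esc_sub_of_mem_posOf huα).mp (hR.mem_esc_of_eq_none hu huα hσu)
      exact absurd hw (hesc.2 w (moveInto_eq_some h).2)
    · rwa [hσu, Option.some_or] at h
  · rw [stepOf_of_mem_posOf_sub (hσb u w h).1.2]
    exact restrictStrat_eq hu hw h

lemma mem_esc_of_stepOf_notMem (hR : G.QuasiDomStrat α R σ)
    (hσb : G.IsStrat (1 - α) (G.atr α R) σb) (hu : u ∈ R) (hw : w ∉ R)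
    (h : G.stepOf α (G.atrStrat α R σ) σb u = some w) : u ∈ G.esc (1 - α) R := by
  rcases G.stepOf_eq_or α (G.atrStrat α R σ) σb u with hs | hs <;> rw [hs] at h
  · have huα := (isStrat_atrStrat hR.1 u w h).1.2
    rw [atrStrat_of_mem huα hu] at h
    rcases hσu : σ u with _ | x
    · exact hR.mem_esc_of_eq_none hu huα hσu
    · rw [hσu, Option.some_or] at h
      exact (hw (Option.some.inj h ▸ (hR.1 u x hσu).2.1)).elim
  · obtain ⟨⟨-, huβ⟩, -, hm⟩ := hσb u w h
    exact (mem_esc_of_mem_posOf huβ).mpr ⟨hu, w, hm, hw⟩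

lemma atrRank_lt_of_stepOf (hσb : G.IsStrat (1 - α) (G.atr α R) σb) (hu : u ∈ G.atr α R)
    (huR : u ∉ R) (h : G.stepOf α (G.atrStrat α R σ) σb u = some w) :
    G.atrRank α R w < G.atrRank α R u := by
  rcases G.stepOf_eq_or α (G.atrStrat α R σ) σb u with hs | hs <;> rw [hs] at h
  · exact atrRank_lt_of_atrStrat huR h
  · obtain ⟨⟨-, huβ⟩, -, hm⟩ := hσb u w h
    exact ((mem_pre_of_mem_posOf_sub huβ).mp (mem_pre_atrRank_lt hu huR) w hm).2

lemma mem_esc_of_stepOf_eq_none (hdom : G.intOf (1 - α) (G.atr α R) ⊆ {v | (σb v).isSome})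
    (hu : u ∈ G.atr α R) (hupos : u ∈ G.pos) (h : G.stepOf α (G.atrStrat α R σ) σb u = none) :
    u ∈ G.esc (1 - α) (G.atr α R) := by
  rcases mem_posOf_or_mem_posOf_sub (α := α) hupos with huα | huβ
  · rw [stepOf_of_mem_posOf huα] at h
    exact mem_esc_of_atrStrat_eq_none huα hu h
  · rw [stepOf_of_mem_posOf_sub huβ] at h
    by_contra hesc
    simpa [h] using hdom ⟨⟨hu, huβ⟩, hesc⟩

end AtrPlays

lemma pr_le_maxPr (hv : v ∈ G.pos) : G.pr v ≤ G.maxPr :=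
  le_csSup (G.finpos.image G.pr).bddAbove (mem_image_of_mem G.pr hv)

lemma QuasiDomStrat.limsup_of_eventually_mem {σ σb : V → Option V} {π : ℕ → V} {N : ℕ}
    (hR : G.QuasiDomStrat α R σ) (hσb : G.IsStrat (1 - α) (G.atr α R) σb)
    (hdom : G.intOf (1 - α) (G.atr α R) ⊆ {v | (σb v).isSome})
    (hstep : ∀ n, G.stepOf α (G.atrStrat α R σ) σb (π n) = some (π (n + 1)))
    (hN : ∀ n ≥ N, π n ∈ R) : limsup (G.pr ∘ π) atTop % 2 = α := by
  have hstepR n : G.stepOf α σ (restrictStrat σb R) (π (n + N)) = some (π (n + 1 + N)) := by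
    rw [Nat.add_right_comm]
    exact stepOf_restrictStrat_of_mem hR hσb (hN _ (by omega)) (hN _ (by omega)) (hstep _)
  have hwin := (hR.2 _ (isStrat_restrictStrat hσb)
    (intOf_subset_restrictStrat (G.subset_atr α R) hσb hdom) _ (hN (0 + N) (by omega))).1 _
    (playOf_eq_of_stepOf hstepR)
  rwa [← limsup_nat_add _ N]

lemma limsup_eq_maxPr_of_frequently_notMem {σ σb : V → Option V} {π : ℕ → V}
    (hR : G.QuasiDomStrat α R σ) (hRpos : R ⊆ G.pos) (hσb : G.IsStrat (1 - α) (G.atr α R) σb)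
    (hesc : ∀ v ∈ G.esc (1 - α) R, G.pr v = G.maxPr)
    (hstep : ∀ n, G.stepOf α (G.atrStrat α R σ) σb (π n) = some (π (n + 1)))
    (hmem : ∀ n, π n ∈ G.atr α R) (hleave : ∃ᶠ n in atTop, π n ∉ R) :
    limsup (G.pr ∘ π) atTop = G.maxPr := by
  have hin : ∃ᶠ n in atTop, π n ∈ R := frequently_atTop_of_lt_of_not
    (f := fun n => G.atrRank α R (π n)) fun n hn => atrRank_lt_of_stepOf hσb (hmem n) hn (hstep n)
  have hmax : ∃ᶠ n in atTop, (G.pr ∘ π) n = G.maxPr := (hin.and_not_succ hleave).mono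
    fun n hn => hesc _ (mem_esc_of_stepOf_notMem hR hσb hn.1 hn.2 (hstep n))
  exact limsup_eq_of_frequently_eq (fun n => pr_le_maxPr (atr_subset_pos hRpos (hmem n))) hmax

lemma QuasiDomStrat.atr {σ : V → Option V} (hR : G.QuasiDomStrat α R σ) (hRpos : R ⊆ G.pos)
    (hpar : G.maxPr % 2 = α) (hesc : ∀ v ∈ G.esc (1 - α) R, G.pr v = G.maxPr) :
    G.QuasiDomStrat α (G.atr α R) (G.atrStrat α R σ) := by
  refine ⟨isStrat_atrStrat hR.1, fun σb hσb hdom v hv => ⟨fun π hπ => ?_, fun n u hn hn1 => ?_⟩⟩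
  · have hstep := stepOf_eq_of_playOf hπ
    by_cases hleave : ∃ᶠ n in atTop, π n ∉ R
    · have hmem n : π n ∈ G.atr α R := playOf_mem (isStrat_atrStrat hR.1) hσb hv n (hπ n)
      rwa [limsup_eq_maxPr_of_frequently_notMem hR hRpos hσb hesc hstep hmem hleave]
    · obtain ⟨N, hN⟩ := eventually_atTop.mp (not_frequently.mp hleave)
      exact hR.limsup_of_eventually_mem hσb hdom hstep fun n hn => not_not.mp (hN n hn)
  · rw [playOf_succ, hn, Option.bind_some] at hn1
    have hu := playOf_mem (isStrat_atrStrat hR.1) hσb hv n hn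
    exact mem_esc_of_stepOf_eq_none hdom hu (atr_subset_pos hRpos hu) hn1

theorem IsRegion.atr (hR : G.IsRegion α R) : G.IsRegion α (G.atr α R) := by
  obtain ⟨hQ, hpar, hesc⟩ := hR
  obtain ⟨hne, hRpos, σ, hσ⟩ := quasiDom_iff.mp hQ
  exact ⟨quasiDom_iff.mpr ⟨hne.mono (G.subset_atr α R), atr_subset_pos hRpos, _,
    hσ.atr hRpos hpar hesc⟩, hpar, fun v hv => hesc v (esc_atr_subset hv)⟩

end PGame

theorem region_extension_general {V : Type*} (G : PGame V) (α : ℕ)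
    (R : Set V) (hR : G.IsRegion α R) :
    G.IsRegion α (G.atr α R) ∧ G.IsMaximal α (G.atr α R) :=
  ⟨hR.atr, G.atr_atr α R⟩

/-- **Region Extension.** If `R` is an `α`-region in the parity game `G`, then its
`α`-attractor `atr^α(R)` is an `α`-maximal `α`-region in `G`. -/
theorem region_extension {V : Type*} (G : PGame V) (α : ℕ) (hα : α = 0 ∨ α = 1)
    (R : Set V) (hsub : R ⊆ G.pos) (hR : G.IsRegion α R) :
    G.IsRegion α (G.atr α R) ∧ G.IsMaximal α (G.atr α R) :=
  region_extension_general G α R hR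
end

section
/- Let G be a parity game, R ⊆ Pos an α-region in G, and D ⊆ Pos(G ∖ R) an α-dominion in the subgame G ∖ R. If R is α-maximal in G and D is α-maximal in G ∖ R, then R ∪ D is α-maximal in G. -/
open Filter Set

lemma PGame.isMaximal_iff {V : Type*} (G : PGame V) (α : ℕ) (A : Set V) :
    G.IsMaximal α A ↔ G.pre α A ⊆ A := by
  unfold PGame.IsMaximal PGame.atr
  set f : Set V →o Set V :=
    ⟨fun U => A ∪ G.pre α U, fun U U' h => union_subset_union subset_rfl (G.pre_mono α h)⟩
  constructor
  · intro h
    have h2 := OrderHom.map_lfp f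
    rw [h] at h2
    have : G.pre α A ⊆ f A := subset_union_right
    rw [h2] at this
    exact this
  · intro h
    apply le_antisymm
    · exact OrderHom.lfp_le f (union_subset subset_rfl h)
    · calc A ⊆ f (OrderHom.lfp f) := subset_union_left
        _ = OrderHom.lfp f := OrderHom.map_lfp f

lemma PGame.mem_subPos_of_step {V : Type*} (G : PGame V) (U : Set V) (v : V)
    (hv : v ∈ G.pos \ U) (h : ∃ u ∈ G.subPos U, G.mv v u) : v ∈ G.subPos U := by
  refine ⟨insert v (G.subPos U), ⟨insert_subset hv (G.subPos_subset U), ?_⟩, mem_insert _ _⟩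
  rintro w (rfl | hw)
  · obtain ⟨u, hu, hm⟩ := h
    exact ⟨u, Or.inr hu, hm⟩
  · obtain ⟨u, hu, hm⟩ := G.subPos_step U w hw
    exact ⟨u, Or.inr hu, hm⟩

lemma PGame.posOf_subset_pos_s2 {V : Type*} (G : PGame V) (α : ℕ) : G.posOf α ⊆ G.pos := by
  unfold PGame.posOf PGame.pos
  split_ifs
  · exact subset_union_left
  · exact subset_union_right

lemma PGame.sub_posOf {V : Type*} (G : PGame V) (U : Set V) (α : ℕ) :
    (G.sub U).posOf α = G.posOf α ∩ G.subPos U := by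
  unfold PGame.posOf PGame.sub
  split_ifs <;> rfl

/-- **Region Merging, maximality.** If `R` is an `α`-maximal `α`-region in the parity
game `G` and `D` is an `α`-dominion in the subgame `G ∖ R` that is `α`-maximal in
`G ∖ R`, then `R ∪ D` is `α`-maximal in `G`. -/
theorem region_merging_maximal {V : Type*} (G : PGame V) (α : ℕ) (hα : α = 0 ∨ α = 1)
    (R D : Set V) (hR : G.IsRegion α R) (hDsub : D ⊆ (G.sub R).pos)
    (hD : (G.sub R).Dominion α D)
    (hRmax : G.IsMaximal α R) (hDmax : (G.sub R).IsMaximal α D) :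
    G.IsMaximal α (R ∪ D) := by
  rw [G.isMaximal_iff]
  rw [G.isMaximal_iff] at hRmax
  rw [(G.sub R).isMaximal_iff] at hDmax
  intro v hv
  by_contra hvRD
  have hvR : v ∉ R := fun h => hvRD (Or.inl h)
  have hDpos : D ⊆ G.subPos R := by
    intro u hu
    have := hDsub hu
    rcases this with ⟨_, h⟩ | ⟨_, h⟩ <;> exact h
  rcases hv with ⟨h1, u, hu, hm⟩ | ⟨h1, h2⟩
  · -- v ∈ posOf α, some successor u ∈ R ∪ D
    rcases hu with huR | huD
    · exact hvR (hRmax (Or.inl ⟨h1, u, huR, hm⟩))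
    · have hvsub : v ∈ G.subPos R :=
        G.mem_subPos_of_step R v ⟨G.posOf_subset_pos_s2 α h1, hvR⟩ ⟨u, hDpos huD, hm⟩
      have : v ∈ (G.sub R).pre α D :=
        Or.inl ⟨by rw [G.sub_posOf]; exact ⟨h1, hvsub⟩, u, huD, hm, hvsub, hDpos huD⟩
      exact hvRD (Or.inr (hDmax this))
  · -- v ∈ posOf (1-α), all successors in R ∪ D
    by_cases hall : ∀ u, G.mv v u → u ∈ R
    · exact hvR (hRmax (Or.inr ⟨h1, hall⟩))
    · push_neg at hall
      obtain ⟨u, hm, huR⟩ := hall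
      have huD : u ∈ D := (h2 u hm).resolve_left huR
      have hvsub : v ∈ G.subPos R :=
        G.mem_subPos_of_step R v ⟨G.posOf_subset_pos_s2 (1 - α) h1, hvR⟩ ⟨u, hDpos huD, hm⟩
      have : v ∈ (G.sub R).pre α D := by
        refine Or.inr ⟨by rw [G.sub_posOf]; exact ⟨h1, hvsub⟩, ?_⟩
        rintro w ⟨hmw, _, hwsub⟩
        rcases h2 w hmw with hwR | hwD
        · exact absurd hwR (G.subPos_subset R hwsub).2
        · exact hwD
      exact hvRD (Or.inr (hDmax this))
end

section
/- For every parity game G with n ≥ 1 positions and k priorities, 1 ≤ k ≤ n, the number of states of the DP dominion space for G is at most 2^k · k^{2n}. -/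
open Filter Set

namespace PGame

variable {V : Type*}

/-- The subgame `G_r^{≤ p} := G ∖ dom(r^{(> p)})` induced by the priority function `r`. -/
noncomputable def subLE (G : PGame V) (r : V → ℕ) (p : ℕ) : PGame V :=
  G.sub {v ∈ G.pos | p < r v}

/-- `m` is the maximisation of the priority function `r`: for every `q ∈ rng(r)`, with
`β := q mod 2`, the set `m⁻¹(q)` is the `β`-attractor, in the subgame `G_m^{≤ q}`, of
`r⁻¹(q) ∩ Pos(G_m^{≤ q})`. -/
noncomputable def IsMaximization (G : PGame V) (r m : V → ℕ) : Prop :=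
  m '' G.pos ⊆ r '' G.pos ∧
  ∀ q ∈ r '' G.pos,
    {v ∈ G.pos | m v = q} =
      (G.subLE m q).atr (q % 2) {v ∈ (G.subLE m q).pos | r v = q}

/-- `r` is a region function: for every `q` in the range of its maximisation `m`, the
set `r⁻¹(q) ∩ Pos(G_m^{≤ q})` is a `(q mod 2)`-region in the subgame `G_m^{≤ q}`. -/
noncomputable def IsRegionFun (G : PGame V) (r : V → ℕ) : Prop :=
  ∃ m : V → ℕ, G.IsMaximization r m ∧
    ∀ q ∈ m '' G.pos,
      (G.subLE m q).IsRegion (q % 2) {v ∈ (G.subLE m q).pos | r v = q}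

/-- `r` is maximal above `p`: it coincides with its maximisation on all positions of
measure greater than `p`. -/
noncomputable def MaximalAbove (G : PGame V) (r : V → ℕ) (p : ℕ) : Prop :=
  ∃ m : V → ℕ, G.IsMaximization r m ∧
    ∀ v ∈ G.pos, (p < r v ∨ p < m v) → r v = m v

/-- A PP⁺ state: a region function `r` together with a current priority `p ∈ rng(r)`
such that `r` is maximal above `p`. -/
structure PPState {V : Type*} (G : PGame V) where
  r : V → ℕ
  p : ℕ
  regFun : G.IsRegionFun r
  mem : p ∈ r '' G.pos
  maxAbove : G.MaximalAbove r p

/-- The subgame `G_s` at a PP⁺ state `s = (r, p)`. -/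
noncomputable def atState (G : PGame V) (s : PPState G) : PGame V := G.subLE s.r s.p

/-- `r₁^{(> q)} = r₂^{(> q)}`: the two priority functions agree above `q`. -/
def restrEqAbove (G : PGame V) (r1 r2 : V → ℕ) (q : ℕ) : Prop :=
  ∀ v ∈ G.pos, (q < r1 v ∨ q < r2 v) → r1 v = r2 v

/-- The strict order `s₁ ⋖ s₂` on PP⁺ states: either some region of measure `q ≥ p₁`
strictly grew while all higher ones are unchanged, or the region functions coincide and
the current priority decreased. -/
def ppLt (G : PGame V) (s1 s2 : PPState G) : Prop :=
  (∃ q ∈ s1.r '' G.pos, s1.p ≤ q ∧ G.restrEqAbove s1.r s2.r q ∧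
      {v ∈ G.pos | s2.r v = q} ⊂ {v ∈ G.pos | s1.r v = q}) ∨
  ((∀ v ∈ G.pos, s1.r v = s2.r v) ∧ s1.p < s2.p)

/-- `bep^β(R, r)`: the best escape priority for player `β` from `R` w.r.t. `r`, i.e. the
minimal `r`-measure of a position outside `R` reachable by a move of a `β`-position
of `R`. -/
noncomputable def bep (G : PGame V) (β : ℕ) (R : Set V) (r : V → ℕ) : ℕ :=
  sInf {n | ∃ v u, v ∈ R ∩ G.posOf β ∧ G.mv v u ∧ u ∈ G.pos \ R ∧ r u = n}

/-- The query operator: at state `(r, p)` it returns the `α`-attractor, in the subgame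
`G_r^{≤ p}`, of the set of positions of measure `p`, together with `α := p mod 2`. -/
noncomputable def ppQuery (G : PGame V) (r : V → ℕ) (p : ℕ) : Set V × ℕ :=
  ((G.subLE r p).atr (p % 2) {v ∈ (G.subLE r p).pos | r v = p}, p % 2)

/-- Compatibility for PP⁺: an open quasi dominion pair `(R, α)` of `G` is compatible
with `s = (r, p)` iff `R` is an `α`-region in `G_s` and, if `R` is `α`-open in `G_s`,
then `R` is the `α`-attractor in `G_s` of `r⁻¹(p)`. -/
noncomputable def ppCompat (G : PGame V) (s : PPState G) (Rα : Set V × ℕ) : Prop :=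
  G.QuasiDom Rα.2 Rα.1 ∧ G.esc (1 - Rα.2) Rα.1 ≠ ∅ ∧
  (G.atState s).IsRegion Rα.2 Rα.1 ∧
  ((G.atState s).esc (1 - Rα.2) Rα.1 ≠ ∅ →
    Rα.1 = (G.atState s).atr Rα.2 {v ∈ (G.atState s).pos | s.r v = s.p})

open Classical in
/-- The PP⁺ successor operator, returning the components `(r★, p★)` of the next state:
if `R` is open in the subgame `G_s` it is assigned measure `p` and the search moves to
the next lower priority; otherwise `R` is promoted to `p★ := bep^ᾱ(R, r)` and all the
regions of the opponent parity with measure lower than `p★` are reset to their original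
priorities. -/
noncomputable def ppSucc (G : PGame V) (s : PPState G) (Rα : Set V × ℕ) :
    (V → ℕ) × ℕ :=
  if (G.atState s).esc (1 - Rα.2) Rα.1 ≠ ∅ then
    ((fun v => if v ∈ Rα.1 then s.p else s.r v),
      sSup {q | ∃ v ∈ G.pos, (if v ∈ Rα.1 then s.p else s.r v) = q ∧ q < s.p})
  else
    ((fun v => if v ∈ Rα.1 then G.bep (1 - Rα.2) Rα.1 s.r
        else if G.bep (1 - Rα.2) Rα.1 s.r ≤ s.r v ∨
                s.r v % 2 = G.bep (1 - Rα.2) Rα.1 s.r % 2 then s.r v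
        else G.pr v),
      G.bep (1 - Rα.2) Rα.1 s.r)

end PGame

namespace PGame

variable {V : Type*}

/-- The completion `r ⊎ r̃` of the region function `r` with the partial priority
function `r̃`. -/
noncomputable def comb (r : V → ℕ) (rt : V → Option ℕ) : V → ℕ :=
  fun v => (rt v).getD (r v)

/-- The partial priority function `r̃` is aligned with the region function `r` w.r.t.
the current priority `p`: for every `q ∈ rng(r̃)`, (a) `r̃⁻¹(q)` only contains positions
whose `r`-measure is greater than `p`, lower than `q` and of the same parity as `q`,
and (b) `r⁻¹(q) ∪ r̃⁻¹(q)` is a `(q mod 2)`-region in the subgame `G_r^{≤ q}`. -/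
noncomputable def Aligned (G : PGame V) (r : V → ℕ) (p : ℕ) (rt : V → Option ℕ) : Prop :=
  (∀ v, rt v ≠ none → v ∈ G.pos) ∧
  ∀ q : ℕ, (∃ v, rt v = some q) →
    ({v ∈ G.pos | rt v = some q} ⊆
        {v ∈ G.pos | p < r v ∧ r v < q ∧ r v % 2 = q % 2}) ∧
    (G.subLE r q).IsRegion (q % 2)
      ({v ∈ G.pos | r v = q} ∪ {v ∈ G.pos | rt v = some q})

/-- A DP state: a PP⁺ state `(r, p)`, a partial priority function `r̃` aligned with `r`
w.r.t. `p` recording the delayed promotions, and a set `P` of priorities recording the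
targets of the instant promotions performed. -/
structure DPState {V : Type*} (G : PGame V) where
  toPP : PPState G
  rt : V → Option ℕ
  P : Set ℕ
  aligned : G.Aligned toPP.r toPP.p rt

/-- The order on DP states: `s₁ ⋖ s₂` iff the underlying PP⁺ states are in the PP⁺
order. -/
def dpLt (G : PGame V) (s1 s2 : DPState G) : Prop := ppLt G s1.toPP s2.toPP

/-- `φ_a(q, P)`: the promotion target `q` overtakes a recorded instant promotion of the
opposite parity. -/
def lockA (q : ℕ) (P : Set ℕ) : Prop := ∃ l ∈ P, l % 2 ≠ q % 2 ∧ l < q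

/-- `φ_b(q, r, r̃)`: the promotion target `q` falls strictly between the source and the
target of some previously delayed promotion. -/
def lockB (q : ℕ) (r : V → ℕ) (rt : V → Option ℕ) : Prop :=
  ∃ v t, rt v = some t ∧ r v < q ∧ q ≤ t

/-- An `α`-region `R` (closed in the current subgame) is `α`-locked w.r.t. the state
`s` when its best escape priority `q := bep^ᾱ(R, r ⊎ r̃)` satisfies `φ_a ∨ φ_b`. -/
noncomputable def dpLocked (G : PGame V) (s : DPState G) (Rα : Set V × ℕ) : Prop :=
  lockA (G.bep (1 - Rα.2) Rα.1 (comb s.toPP.r s.rt)) s.P ∨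
  lockB (G.bep (1 - Rα.2) Rα.1 (comb s.toPP.r s.rt)) s.toPP.r s.rt

/-- Compatibility for DP: an open quasi dominion pair `(R, α)` of `G` is compatible
with `s` iff `R` is an `α`-region in `G_s` and, if `R` is `α`-open in `G_s` or
`α`-locked w.r.t. `s`, then `R` is the `α`-attractor in `G_s` of `r⁻¹(p)`. -/
noncomputable def dpCompat (G : PGame V) (s : DPState G) (Rα : Set V × ℕ) : Prop :=
  G.QuasiDom Rα.2 Rα.1 ∧ G.esc (1 - Rα.2) Rα.1 ≠ ∅ ∧
  (G.atState s.toPP).IsRegion Rα.2 Rα.1 ∧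
  (((G.atState s.toPP).esc (1 - Rα.2) Rα.1 ≠ ∅ ∨ G.dpLocked s Rα) →
    Rα.1 = (G.atState s.toPP).atr Rα.2
      {v ∈ (G.atState s.toPP).pos | s.toPP.r v = s.toPP.p})

open Classical in
/-- The DP successor operator, returning the components `((r★, p★), r̃★, P★)` of the
next state. Case 1: `R` open in `G_s` gets measure `p` and the search descends.
Case 2: instant promotion of `R` to `q := bep^ᾱ(R, r ⊎ r̃)` when not locked, resetting
the opponent regions below `q` (and the reset entries of `r̃`) and recording `q` in `P`.
Case 3: locked promotion with a nonempty remaining subgame: the promotion is delayed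
and recorded in `r̃`. Case 4: locked promotion covering the whole subgame: the delayed
promotion to the highest priority recorded in `r̃★ := r̃ ⊎ (R ↦ q)` is performed,
together with all delayed promotions of the same parity, and `r̃` and `P` are emptied. -/
noncomputable def dpSucc (G : PGame V) (s : DPState G) (Rα : Set V × ℕ) :
    ((V → ℕ) × ℕ) × (V → Option ℕ) × Set ℕ :=
  let r := s.toPP.r
  let p := s.toPP.p
  let R := Rα.1
  let q := G.bep (1 - Rα.2) Rα.1 (comb s.toPP.r s.rt)
  if (G.atState s.toPP).esc (1 - Rα.2) Rα.1 ≠ ∅ then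
    -- case 1: `R` is α-open in the current subgame
    (((fun v => if v ∈ R then p else r v),
        sSup {q' | ∃ v ∈ G.pos, (if v ∈ R then p else r v) = q' ∧ q' < p}),
      s.rt, s.P)
  else if ¬ G.dpLocked s Rα then
    -- case 2: instant promotion to `q`
    (((fun v => if v ∈ R then q
        else if q ≤ r v ∨ r v % 2 = q % 2 then r v else G.pr v), q),
      (fun v => if v ∈ R ∨ (r v < q ∧ r v % 2 ≠ q % 2) then none else s.rt v),
      s.P ∪ {q})
  else if R ≠ (G.atState s.toPP).pos then
    -- case 3: the promotion to `q` is delayed and recorded in `r̃`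
    (((fun v => if v ∈ R then p else r v),
        sSup {q' | ∃ v ∈ G.pos, (if v ∈ R then p else r v) = q' ∧ q' < p}),
      (fun v => if v ∈ R then some q else s.rt v), s.P)
  else
    -- case 4: delayed promotion to `p★`, the highest priority recorded in `r̃★`
    let rtS : V → Option ℕ := fun v => if v ∈ R then some q else s.rt v
    let pS : ℕ := sSup {q' | ∃ v, rtS v = some q'}
    (((fun v => if pS ≤ comb r rtS v ∨ comb r rtS v % 2 = pS % 2
        then comb r rtS v else G.pr v), pS),
      (fun _ => none), (∅ : Set ℕ))

end PGame


namespace PGame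

/-- Key facts extracted from the alignment condition of a DP state. -/
lemma DPState.facts {V : Type*} {G : PGame V} (s : DPState G) :
    (∀ v q, s.rt v = some q → v ∈ G.pos ∧ s.toPP.p < s.toPP.r v ∧ s.toPP.r v < q) ∧
    (∃ v ∈ G.pos, s.toPP.r v = s.toPP.p ∧ s.rt v = none) := by
  obtain ⟨h1, h2⟩ := s.aligned
  have key : ∀ v q, s.rt v = some q →
      v ∈ G.pos ∧ s.toPP.p < s.toPP.r v ∧ s.toPP.r v < q := by
    intro v q h
    have hv : v ∈ G.pos := h1 v (by simp [h])
    have h3 := (h2 q ⟨v, h⟩).1 (show v ∈ {v ∈ G.pos | s.rt v = some q} from ⟨hv, h⟩)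
    exact ⟨hv, h3.2.1, h3.2.2.1⟩
  refine ⟨key, ?_⟩
  obtain ⟨v, hv, hrv⟩ := s.toPP.mem
  refine ⟨v, hv, hrv, ?_⟩
  cases h : s.rt v with
  | none => rfl
  | some q => have := (key v q h).2.1; omega

end PGame

open PGame in
/-- **DP size upper bound.** For a parity game `G` with `n ≥ 1` positions and `k`
priorities (taken from the finite priority set `Pr`), `1 ≤ k ≤ n`, the set of states of
the DP dominion space for `G` (states being tuples `((r, p), r̃, P)` of priority
functions valued in `Pr`, normalised outside the positions of the game) is finite and
has at most `2^k * k^(2*n)` elements. -/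
theorem dp_size_upper_bound {V : Type*} (G : PGame V) (Pr : Finset ℕ)
    (hpr : ∀ v ∈ G.pos, G.pr v ∈ Pr) (n k : ℕ)
    (hn : n = Nat.card G.pos) (hk : k = Pr.card)
    (hn1 : 1 ≤ n) (hk1 : 1 ≤ k) (hkn : k ≤ n) :
    letI S : Set (((V → ℕ) × ℕ) × (V → Option ℕ) × Set ℕ) :=
      {x | (∃ s : DPState G, s.toPP.r = x.1.1 ∧ s.toPP.p = x.1.2 ∧
              s.rt = x.2.1 ∧ s.P = x.2.2) ∧
           (∀ v ∈ G.pos, x.1.1 v ∈ Pr) ∧ (∀ v, v ∉ G.pos → x.1.1 v = 0) ∧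
           (∀ v q, x.2.1 v = some q → q ∈ Pr) ∧ (∀ v, v ∉ G.pos → x.2.1 v = none) ∧
           x.2.2 ⊆ ↑Pr}
    S.Finite ∧ Nat.card S ≤ 2 ^ k * k ^ (2 * n) := by
  classical
  set S : Set (((V → ℕ) × ℕ) × (V → Option ℕ) × Set ℕ) :=
    {x | (∃ s : DPState G, s.toPP.r = x.1.1 ∧ s.toPP.p = x.1.2 ∧
            s.rt = x.2.1 ∧ s.P = x.2.2) ∧
         (∀ v ∈ G.pos, x.1.1 v ∈ Pr) ∧ (∀ v, v ∉ G.pos → x.1.1 v = 0) ∧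
         (∀ v q, x.2.1 v = some q → q ∈ Pr) ∧ (∀ v, v ∉ G.pos → x.2.1 v = none) ∧
         x.2.2 ⊆ ↑Pr} with hS
  have hfin : G.pos.Finite := G.finpos
  haveI := hfin.fintype
  -- facts about the members of `S`
  have hmem : ∀ x ∈ S, (∀ v ∈ G.pos, x.1.1 v ∈ Pr) ∧ x.1.2 ∈ Pr ∧
      (∀ v q, x.2.1 v = some q → q ∈ Pr) ∧
      (∀ (v : V) q, x.2.1 v = some q → v ∈ G.pos ∧ x.1.2 < x.1.1 v ∧ x.1.1 v < q) ∧
      (∃ v ∈ G.pos, x.1.1 v = x.1.2 ∧ x.2.1 v = none) ∧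
      (∀ v, v ∉ G.pos → x.1.1 v = 0) ∧ (∀ v, v ∉ G.pos → x.2.1 v = none) ∧
      x.2.2 ⊆ ↑Pr := by
    rintro x ⟨⟨s, hr, hp, hrt, hPP⟩, h2, h3, h4, h5, h6⟩
    obtain ⟨k1, k2⟩ := s.facts
    refine ⟨h2, ?_, h4, ?_, ?_, h3, h5, h6⟩
    · obtain ⟨v, hv, hrv, -⟩ := k2
      rw [← hp, ← hrv, hr]; exact h2 v hv
    · rw [← hp, ← hr, ← hrt]; exact k1
    · rw [← hp, ← hr, ← hrt]; exact k2
  -- the injection into a finite type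
  have hF : ∃ F : S → ((↥G.pos → (↥Pr × ↥Pr)) × (↥Pr → Prop)),
      Function.Injective F := by
    refine ⟨fun x => ((fun v => (⟨x.1.1.1 v, (hmem x.1 x.2).1 v v.2⟩,
        ⟨(x.1.2.1 (v : V)).getD x.1.1.2, ?_⟩)), fun q => (q : ℕ) ∈ x.1.2.2), ?_⟩
    · cases h : x.1.2.1 (v : V) with
      | none => simpa [h] using (hmem x.1 x.2).2.1
      | some q => simpa [h] using (hmem x.1 x.2).2.2.1 (v : V) q h
    · intro x y hxy
      obtain ⟨hx1, hx2, hx3, hx4, hx5, hx6, hx7, hx8⟩ := hmem x.1 x.2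
      obtain ⟨hy1, hy2, hy3, hy4, hy5, hy6, hy7, hy8⟩ := hmem y.1 y.2
      have hfun := congrFun (congrArg Prod.fst hxy)
      have hPeq := congrArg Prod.snd hxy
      have key : ∀ v (hv : v ∈ G.pos), x.1.1.1 v = y.1.1.1 v ∧
          (x.1.2.1 v).getD x.1.1.2 = (y.1.2.1 v).getD y.1.1.2 := by
        intro v hv
        have h := hfun ⟨v, hv⟩
        rw [Prod.ext_iff] at h
        exact ⟨Subtype.ext_iff.mp h.1, Subtype.ext_iff.mp h.2⟩
      -- the current priorities agree
      have hpeq : x.1.1.2 = y.1.1.2 := by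
        rcases lt_trichotomy x.1.1.2 y.1.1.2 with h | h | h
        · obtain ⟨v, hv, hrv, hnone⟩ := hx5
          have hg := (key v hv).2
          rw [hnone] at hg
          simp only [Option.getD_none] at hg
          cases hy0 : y.1.2.1 v with
          | none => rw [hy0] at hg; simp only [Option.getD_none] at hg; omega
          | some q =>
            rw [hy0] at hg; simp only [Option.getD_some] at hg
            have h5 := (hy4 v q hy0).2
            omega
        · exact h
        · obtain ⟨v, hv, hrv, hnone⟩ := hy5
          have hg := (key v hv).2
          rw [hnone] at hg
          simp only [Option.getD_none] at hg
          cases hx0 : x.1.2.1 v with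
          | none => rw [hx0] at hg; simp only [Option.getD_none] at hg; omega
          | some q =>
            rw [hx0] at hg; simp only [Option.getD_some] at hg
            have h5 := (hx4 v q hx0).2
            omega
      -- the region functions agree
      have hreq : x.1.1.1 = y.1.1.1 := by
        funext v
        by_cases hv : v ∈ G.pos
        · exact (key v hv).1
        · rw [hx6 v hv, hy6 v hv]
      -- the partial functions agree
      have hrteq : x.1.2.1 = y.1.2.1 := by
        funext v
        by_cases hv : v ∈ G.pos
        · have hg := (key v hv).2
          cases hx0 : x.1.2.1 v with
          | none =>
            cases hy0 : y.1.2.1 v with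
            | none => rfl
            | some q =>
              rw [hx0, hy0] at hg
              simp only [Option.getD_none, Option.getD_some] at hg
              have h5 := (hy4 v q hy0).2
              have h6 := (key v hv).1
              omega
          | some q =>
            cases hy0 : y.1.2.1 v with
            | none =>
              rw [hx0, hy0] at hg
              simp only [Option.getD_none, Option.getD_some] at hg
              have h5 := (hx4 v q hx0).2
              have h6 := (key v hv).1
              omega
            | some q' =>
              rw [hx0, hy0] at hg
              simp only [Option.getD_some] at hg
              rw [hg]
        · rw [hx7 v hv, hy7 v hv]
      -- the promotion sets agree
      have hPeq' : x.1.2.2 = y.1.2.2 := by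
        apply Set.Subset.antisymm
        · intro q hq
          have hqPr : q ∈ Pr := hx8 hq
          have h := congrFun hPeq ⟨q, hqPr⟩
          simp only at h
          exact h ▸ hq
        · intro q hq
          have hqPr : q ∈ Pr := hy8 hq
          have h := congrFun hPeq ⟨q, hqPr⟩
          simp only at h
          exact h ▸ hq
      exact Subtype.ext (Prod.ext (Prod.ext hreq hpeq) (Prod.ext hrteq hPeq'))
  obtain ⟨F, hFinj⟩ := hF
  haveI : Finite ((↥G.pos → (↥Pr × ↥Pr)) × (↥Pr → Prop)) := by infer_instance
  have hSfin : Finite ↥S := Finite.of_injective F hFinj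
  have hcardT : Nat.card ((↥G.pos → (↥Pr × ↥Pr)) × (↥Pr → Prop)) =
      2 ^ k * k ^ (2 * n) := by
    have h1 : Fintype.card ↥G.pos = n := by rw [hn, Nat.card_eq_fintype_card]
    have h2 : Fintype.card ↥Pr = k := by rw [hk]; exact Fintype.card_coe Pr
    rw [Nat.card_eq_fintype_card, Fintype.card_prod, Fintype.card_fun,
      Fintype.card_fun, Fintype.card_prod, Fintype.card_prop, h1, h2]
    ring
  refine ⟨Set.finite_coe_iff.mp hSfin, ?_⟩
  calc Nat.card S ≤ Nat.card ((↥G.pos → (↥Pr × ↥Pr)) × (↥Pr → Prop)) :=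
        Nat.card_le_card_of_injective F hFinj
    _ = 2 ^ k * k ^ (2 * n) := hcardT
end
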